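/- arXiv:1712.00710 — 2 statements merged into one kernel-verified Lean document; each statement's English description precedes it below -/
import Mathlib

section
/- Let f:[0,1]²→[0,1] have finite spectrum of rank r with sup_y |q_k(y)| ≤ B for all k, and suppose all λ_k are nonzero with |λ_r| = min_k |λ_k|. For t ≥ 0, define d_t(x,y) = Σ_{k=1}^r λ_k^{2(t+1)}(q_k(x) − q_k(y))². Then for any η > 0 and any x, x', y, y' ∈ [0,1] with d_t(x,x') ≤ η and d_t(y,y') ≤ η, one has |f(x,y) − f(x',y')| ≤ 2B|λ_r|^{-t}√(rη). -/
open MeasureTheory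

lemma cs_aux {r : ℕ} (a b : Fin r → ℝ) (ha : ∀ i, 0 ≤ a i) (hb : ∀ i, 0 ≤ b i) :
    ∑ i, a i * b i ≤ Real.sqrt (∑ i, (a i)^2) * Real.sqrt (∑ i, (b i)^2) := by
  have h : (∑ i, a i * b i)^2 ≤ (∑ i, (a i)^2) * (∑ i, (b i)^2) :=
    Finset.sum_mul_sq_le_sq_mul_sq _ _ _
  calc ∑ i, a i * b i
      = Real.sqrt ((∑ i, a i * b i)^2) :=
        (Real.sqrt_sq (Finset.sum_nonneg fun i _ => mul_nonneg (ha i) (hb i))).symm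
    _ ≤ Real.sqrt ((∑ i, (a i)^2) * (∑ i, (b i)^2)) := Real.sqrt_le_sqrt h
    _ = _ := Real.sqrt_mul (Finset.sum_nonneg fun i _ => sq_nonneg _) _

lemma keybound {r : ℕ} (lam : Fin r → ℝ) (hne : ∀ k, lam k ≠ 0) (kr : Fin r)
    (hmin : ∀ k, |lam kr| ≤ |lam k|) (t : ℕ) (Δ : Fin r → ℝ) (η : ℝ)
    (hΔ : ∑ k, (lam k) ^ (2 * (t + 1)) * (Δ k)^2 ≤ η) :
    ∑ k, |lam k| * |Δ k| ≤ |lam kr|⁻¹ ^ t * (Real.sqrt r * Real.sqrt η) := by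
  set a : Fin r → ℝ := fun k => |lam k| ^ (t + 1) * |Δ k| with ha_def
  set b : Fin r → ℝ := fun k => |lam k|⁻¹ ^ t with hb_def
  have hpos : ∀ k, 0 < |lam k| := fun k => abs_pos.mpr (hne k)
  have hab : ∀ k, a k * b k = |lam k| * |Δ k| := by
    intro k
    have hz : (|lam k|:ℝ) ^ t ≠ 0 := pow_ne_zero _ (ne_of_gt (hpos k))
    have : |lam k| ^ (t + 1) * |lam k|⁻¹ ^ t = |lam k| := by
      rw [pow_succ, inv_pow, mul_comm (|lam k| ^ t), mul_assoc, mul_inv_cancel₀ hz, mul_one]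
    simp only [ha_def, hb_def]
    calc |lam k| ^ (t + 1) * |Δ k| * |lam k|⁻¹ ^ t
        = (|lam k| ^ (t + 1) * |lam k|⁻¹ ^ t) * |Δ k| := by ring
      _ = |lam k| * |Δ k| := by rw [this]
  have hsum1 : ∑ k, (a k)^2 ≤ η := by
    have : ∀ k, (a k)^2 = (lam k) ^ (2 * (t + 1)) * (Δ k)^2 := by
      intro k
      simp only [ha_def]
      rw [mul_pow, ← pow_mul, mul_comm (t+1) 2, pow_mul, pow_mul, sq_abs, sq_abs]
    rw [Finset.sum_congr rfl fun k _ => this k]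
    exact hΔ
  have hsum2 : ∑ k, (b k)^2 ≤ r * (|lam kr|⁻¹ ^ t)^2 := by
    have hle : ∀ k, (b k)^2 ≤ (|lam kr|⁻¹ ^ t)^2 := by
      intro k
      apply pow_le_pow_left₀ (by positivity)
      apply pow_le_pow_left₀ (by positivity)
      exact inv_anti₀ (hpos kr) (hmin k)
    calc ∑ k, (b k)^2 ≤ ∑ _k : Fin r, (|lam kr|⁻¹ ^ t)^2 :=
          Finset.sum_le_sum fun k _ => hle k
      _ = r * (|lam kr|⁻¹ ^ t)^2 := by simp [mul_comm]
  have hcs := cs_aux a b (fun i => mul_nonneg (pow_nonneg (abs_nonneg _) _) (abs_nonneg _))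
    (fun i => pow_nonneg (inv_nonneg.mpr (abs_nonneg _)) _)
  have hηnn : 0 ≤ η := le_trans (Finset.sum_nonneg fun k _ =>
    mul_nonneg (by rw [mul_comm 2, pow_mul]; positivity) (sq_nonneg _)) hΔ
  calc ∑ k, |lam k| * |Δ k| = ∑ k, a k * b k := by
        exact Finset.sum_congr rfl fun k _ => (hab k).symm
    _ ≤ Real.sqrt (∑ i, (a i)^2) * Real.sqrt (∑ i, (b i)^2) := hcs
    _ ≤ Real.sqrt η * Real.sqrt (r * (|lam kr|⁻¹ ^ t)^2) := by
        apply mul_le_mul (Real.sqrt_le_sqrt hsum1) (Real.sqrt_le_sqrt hsum2)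
          (Real.sqrt_nonneg _) (Real.sqrt_nonneg _)
    _ = |lam kr|⁻¹ ^ t * (Real.sqrt r * Real.sqrt η) := by
        rw [Real.sqrt_mul (by positivity), Real.sqrt_sq (by positivity)]
        ring

/-- For f with finite spectrum of rank r, sup|q_k| ≤ B, all λ_k nonzero, and
|λ_r| the smallest modulus (index `kr`), with d_t(x,y) = Σ_k λ_k^{2(t+1)}(q_k(x)−q_k(y))²:
for any η > 0 and x,x',y,y' ∈ [0,1] with d_t(x,x') ≤ η and d_t(y,y') ≤ η,
|f(x,y) − f(x',y')| ≤ 2B|λ_r|^{−t}√(rη). -/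
theorem statement15 {r : ℕ} (f : ℝ → ℝ → ℝ) (lam : Fin r → ℝ) (q : Fin r → ℝ → ℝ) (B : ℝ)
    (hB : 1 ≤ B)
    (hrange : ∀ x ∈ Set.Icc (0:ℝ) 1, ∀ y ∈ Set.Icc (0:ℝ) 1, f x y ∈ Set.Icc (0:ℝ) 1)
    (hsymm : ∀ x y, f x y = f y x)
    (hf : ∀ x y, f x y = ∑ k, lam k * q k x * q k y)
    (hne : ∀ k, lam k ≠ 0)
    (kr : Fin r) (hmin : ∀ k, |lam kr| ≤ |lam k|)
    (hmeas : ∀ k, Measurable (q k))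
    (hqB : ∀ k, ∀ y ∈ Set.Icc (0:ℝ) 1, |q k y| ≤ B)
    (hnorm : ∀ k, ∫ y in Set.Icc (0:ℝ) 1, (q k y) ^ 2 = 1)
    (horth : ∀ k l, k ≠ l → ∫ y in Set.Icc (0:ℝ) 1, q k y * q l y = 0)
    (t : ℕ) (d : ℝ → ℝ → ℝ)
    (hd : ∀ x y, d x y = ∑ k, (lam k) ^ (2 * (t + 1)) * (q k x - q k y) ^ 2) :
    ∀ η : ℝ, 0 < η → ∀ x ∈ Set.Icc (0:ℝ) 1, ∀ x' ∈ Set.Icc (0:ℝ) 1, ∀ y ∈ Set.Icc (0:ℝ) 1,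
      ∀ y' ∈ Set.Icc (0:ℝ) 1, d x x' ≤ η → d y y' ≤ η →
      |f x y - f x' y'| ≤ 2 * B * |lam kr|⁻¹ ^ t * Real.sqrt (r * η) := by
  intro η hη x hx x' hx' y hy y' hy' hdx hdy
  have hBpos : 0 < B := lt_of_lt_of_le one_pos hB
  -- bound one-variable increments
  have key : ∀ u ∈ Set.Icc (0:ℝ) 1, ∀ v ∈ Set.Icc (0:ℝ) 1, ∀ w ∈ Set.Icc (0:ℝ) 1,
      d v w ≤ η → |f v u - f w u| ≤ B * (|lam kr|⁻¹ ^ t * (Real.sqrt r * Real.sqrt η)) := by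
    intro u hu v hv w hw hdvw
    have h1 : f v u - f w u = ∑ k, lam k * q k u * (q k v - q k w) := by
      rw [hf, hf, ← Finset.sum_sub_distrib]
      exact Finset.sum_congr rfl fun k _ => by ring
    have h2 : |f v u - f w u| ≤ ∑ k, |lam k| * B * |q k v - q k w| := by
      rw [h1]
      refine le_trans (Finset.abs_sum_le_sum_abs _ _) (Finset.sum_le_sum fun k _ => ?_)
      rw [abs_mul, abs_mul]
      exact mul_le_mul_of_nonneg_right
        (mul_le_mul_of_nonneg_left (hqB k u hu) (abs_nonneg (lam k))) (abs_nonneg _)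
    have h3 : ∑ k, |lam k| * B * |q k v - q k w| = B * ∑ k, |lam k| * |q k v - q k w| := by
      rw [Finset.mul_sum]
      exact Finset.sum_congr rfl fun k _ => by ring
    rw [h3] at h2
    refine le_trans h2 ?_
    have := keybound lam hne kr hmin t (fun k => q k v - q k w) η (by rw [hd] at hdvw; exact hdvw)
    exact mul_le_mul_of_nonneg_left this (le_of_lt hBpos)
  have step1 : |f x y - f x' y| ≤ B * (|lam kr|⁻¹ ^ t * (Real.sqrt r * Real.sqrt η)) :=
    key y hy x hx x' hx' hdx
  have step2 : |f x' y - f x' y'| ≤ B * (|lam kr|⁻¹ ^ t * (Real.sqrt r * Real.sqrt η)) := by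
    rw [hsymm x' y, hsymm x' y']
    exact key x' hx' y hy y' hy' hdy
  have tri : |f x y - f x' y'| ≤ |f x y - f x' y| + |f x' y - f x' y'| := by
    have := abs_sub_le (f x y) (f x' y) (f x' y')
    exact this
  have hrη : Real.sqrt (r * η) = Real.sqrt r * Real.sqrt η := Real.sqrt_mul (by positivity) _
  rw [hrη]
  calc |f x y - f x' y'| ≤ |f x y - f x' y| + |f x' y - f x' y'| := tri
    _ ≤ B * (|lam kr|⁻¹ ^ t * (Real.sqrt r * Real.sqrt η))
        + B * (|lam kr|⁻¹ ^ t * (Real.sqrt r * Real.sqrt η)) := add_le_add step1 step2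
    _ = 2 * B * |lam kr|⁻¹ ^ t * (Real.sqrt r * Real.sqrt η) := by ring
end

section
/- Let f:[0,1]²→[0,1] have finite spectrum of rank r, be L-Lipschitz in its first argument, and define for t ≥ 0 the distance d(x,y) = Σ_{k=1}^r λ_k^{2(t+1)}(q_k(x) − q_k(y))², where |λ_1| = max_k |λ_k|. Let θ_1,…,θ_n be i.i.d. uniform on [0,1], and fix δ ∈ (0,1) and η' ∈ (0, |λ_1|^{2t}L²). Then with probability at least 1 − n·exp(−δ²(n−1)√(η') / (2|λ_1|^t L)), for every u ∈ [n]: (1/(n−1)) Σ_{a ∈ [n], a≠u} 1{d(θ_u,θ_a) ≤ η'} ≥ (1−δ)√(η') / (|λ_1|^t L). -/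
/-!
Orthonormality of the `q k` turns `∑ k, λₖ² (qₖ x - qₖ y)²` into `∫ (f x z - f y z)² dz`, which
the Lipschitz bound controls by `L² (x - y)²`; hence `d x y ≤ (|λ₁|ᵗ L)² (x - y)²`, and points at
distance at most `ε = √η' / (|λ₁|ᵗ L)` are `d`-close. Conditionally on `θ u`, the events
`|θ u - θ a| ≤ ε` for `a ≠ u` are independent of probability at least `ε`, so the multiplicative
Chernoff bound (exponential Markov at `t = log (1 - δ)`) shows that fewer than `(1 - δ)(n - 1)ε`
of them occur with probability at most `exp (-δ² (n - 1) ε / 2)`. A union bound over `u` ends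
the proof.
-/

open MeasureTheory ProbabilityTheory
open scoped Classical

open Real Finset

lemma sq_div_two_le_add_one_sub_mul_log {δ : ℝ} (h0 : 0 ≤ δ) (h1 : δ < 1) :
    δ ^ 2 / 2 ≤ δ + (1 - δ) * log (1 - δ) := by
  let g : ℝ → ℝ := fun x => x + (1 - x) * log (1 - x) - x ^ 2 / 2
  have hg : ∀ x < 1, HasDerivAt g (-log (1 - x) - x) x := by
    intro x hx
    have hsub : HasDerivAt (fun x : ℝ => 1 - x) (-1) x := by
      simpa using (hasDerivAt_id x).const_sub 1
    refine (((hasDerivAt_id' x).add (hsub.mul (hsub.log (by linarith)))).sub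
      ((hasDerivAt_pow 2 x).div_const 2)).congr_deriv ?_
    field_simp [(by linarith : (1 - x) ≠ 0)]
    ring
  have hmono : MonotoneOn g (Set.Icc 0 δ) := by
    refine monotoneOn_of_hasDerivWithinAt_nonneg (convex_Icc 0 δ)
      (fun x hx => (hg x (by linarith [hx.2])).continuousAt.continuousWithinAt)
      (fun x hx => (hg x (by linarith [(interior_subset hx : x ∈ Set.Icc 0 δ).2])).hasDerivWithinAt)
      fun x hx => ?_
    rw [interior_Icc] at hx
    linarith [log_le_sub_one_of_pos (by linarith [hx.2] : 0 < 1 - x)]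
  have := hmono ⟨le_rfl, h0⟩ ⟨h0, le_rfl⟩ h0
  simp only [g, sub_zero, log_one, mul_zero, add_zero, ne_eq, OfNat.ofNat_ne_zero,
    not_false_eq_true, zero_pow, zero_div] at this
  linarith

lemma exp_mul_indicator_one {Ω : Type*} (A : Set Ω) (t : ℝ) :
    (fun ω => exp (t * A.indicator (fun _ => (1 : ℝ)) ω))
      = fun ω => 1 + A.indicator (fun _ => exp t - 1) ω := by
  funext ω
  by_cases h : ω ∈ A <;> simp [h]

section Probability

variable {Ω : Type*} [MeasurableSpace Ω] {μ : Measure Ω} [IsProbabilityMeasure μ]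

lemma integrable_exp_mul_indicator_one {A : Set Ω} (hA : MeasurableSet A) (t : ℝ) :
    Integrable (fun ω => exp (t * A.indicator (fun _ => (1 : ℝ)) ω)) μ := by
  rw [exp_mul_indicator_one]
  exact (integrable_const _).add ((integrable_const _).indicator hA)

lemma mgf_indicator_one {A : Set Ω} (hA : MeasurableSet A) (t : ℝ) :
    mgf (A.indicator fun _ => (1 : ℝ)) μ t = 1 + (exp t - 1) * μ.real A := by
  rw [mgf, exp_mul_indicator_one, integral_add (integrable_const _)
    ((integrable_const _).indicator hA), integral_indicator_const _ hA]
  simp [mul_comm]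

theorem measure_sum_indicator_le_le_exp {ι : Type*} {A : ι → Set Ω}
    (hA : ∀ i, MeasurableSet (A i)) (hind : iIndepSet A μ) (s : Finset ι) {p δ : ℝ}
    (hp0 : 0 ≤ p) (hp : ∀ i ∈ s, p ≤ μ.real (A i)) (hδ0 : 0 ≤ δ) (hδ1 : δ < 1) :
    μ {ω | ∑ i ∈ s, (A i).indicator (fun _ => (1 : ℝ)) ω ≤ (1 - δ) * #s * p}
      ≤ ENNReal.ofReal (exp (-(δ ^ 2 * #s * p / 2))) := by
  set X : ι → Ω → ℝ := fun i => (A i).indicator fun _ => 1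
  have hXm : ∀ i, Measurable (X i) := fun i => measurable_const.indicator (hA i)
  have hXind : iIndepFun X μ := hind.iIndepFun_indicator
  set t := log (1 - δ)
  have ht : t ≤ 0 := log_nonpos (by linarith) (by linarith)
  have hexp_t : exp t = 1 - δ := exp_log (by linarith)
  have hmgf : mgf (∑ i ∈ s, X i) μ t ≤ exp (-(δ * #s * p)) := by
    rw [hXind.mgf_sum hXm]
    calc ∏ i ∈ s, mgf (X i) μ t = ∏ i ∈ s, (1 - δ * μ.real (A i)) := by
          refine prod_congr rfl fun i _ => ?_
          rw [mgf_indicator_one (hA i), hexp_t]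
          ring
      _ ≤ ∏ _i ∈ s, exp (-(δ * p)) := by
          refine prod_le_prod (fun i _ => ?_) (fun i hi => ?_)
          · nlinarith [measureReal_le_one (μ := μ) (s := A i)]
          · nlinarith [add_one_le_exp (-(δ * p)), hp i hi]
      _ = exp (-(δ * #s * p)) := by
          rw [prod_const, ← exp_nat_mul]
          ring_nf
  have hmarkov := measure_le_le_exp_mul_mgf ((1 - δ) * #s * p) ht
    (hXind.integrable_exp_mul_sum hXm (s := s) fun i _ => integrable_exp_mul_indicator_one (hA i) t)
  have hkey := mul_le_mul_of_nonneg_left (sq_div_two_le_add_one_sub_mul_log hδ0 hδ1)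
    (by positivity : (0 : ℝ) ≤ #s * p)
  rw [← ofReal_measureReal]
  refine ENNReal.ofReal_le_ofReal ?_
  calc μ.real {ω | ∑ i ∈ s, X i ω ≤ (1 - δ) * #s * p}
      ≤ exp (-t * ((1 - δ) * #s * p)) * mgf (∑ i ∈ s, X i) μ t := by
        simpa only [Finset.sum_apply] using hmarkov
    _ ≤ exp (-t * ((1 - δ) * #s * p)) * exp (-(δ * #s * p)) := by gcongr
    _ ≤ exp (-(δ ^ 2 * #s * p / 2)) := by
        rw [← exp_add]
        gcongr
        nlinarith

lemma ProbabilityTheory.IndepFun.measure_mem_eq_lintegral {α β : Type*} [MeasurableSpace α]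
    [MeasurableSpace β] {X : Ω → α} {Y : Ω → β} (hXY : IndepFun X Y μ) (hX : Measurable X)
    (hY : Measurable Y) {B : Set (α × β)} (hB : MeasurableSet B) :
    μ {ω | (X ω, Y ω) ∈ B} = ∫⁻ x, μ {ω | (x, Y ω) ∈ B} ∂(μ.map X) := by
  have hmap := (indepFun_iff_map_prod_eq_prod_map_map hX.aemeasurable hY.aemeasurable).1 hXY
  calc μ {ω | (X ω, Y ω) ∈ B} = μ.map (fun ω => (X ω, Y ω)) B :=
        (Measure.map_apply (hX.prodMk hY) hB).symm
    _ = ∫⁻ x, μ.map Y (Prod.mk x ⁻¹' B) ∂(μ.map X) := by rw [hmap, Measure.prod_apply hB]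
    _ = ∫⁻ x, μ {ω | (x, Y ω) ∈ B} ∂(μ.map X) := by
        refine lintegral_congr fun x => ?_
        rw [Measure.map_apply hY (measurable_prodMk_left hB)]
        rfl

theorem measure_sum_indicator_pair_le_le_exp {ι α : Type*} [MeasurableSpace α] {ν : Measure α}
    {X : ι → Ω → α} (hX : ∀ i, Measurable (X i)) (hind : iIndepFun X μ)
    (hlaw : ∀ i, μ.map (X i) = ν) {E : Set (α × α)} (hE : MeasurableSet E) {p δ : ℝ}
    (hp0 : 0 ≤ p) (hp : ∀ᵐ y ∂ν, p ≤ ν.real (Prod.mk y ⁻¹' E)) (hδ0 : 0 ≤ δ) (hδ1 : δ < 1)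
    {u : ι} {s : Finset ι} (hu : u ∉ s) :
    μ {ω | ∑ a ∈ s, E.indicator (fun _ => (1 : ℝ)) (X u ω, X a ω) ≤ (1 - δ) * #s * p}
      ≤ ENNReal.ofReal (exp (-(δ ^ 2 * #s * p / 2))) := by
  set c := (1 - δ) * #s * p
  let Y : Ω → s → α := fun ω a => X a ω
  have hY : Measurable Y := measurable_pi_lambda _ fun a => hX a
  have hXY : IndepFun (X u) Y μ :=
    (hind.indepFun_finset {u} s (disjoint_singleton_left.2 hu) hX).comp
      (measurable_pi_apply (⟨u, mem_singleton_self u⟩ : ({u} : Finset ι))) measurable_id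
  let B : Set (α × (s → α)) := {z | ∑ a : s, E.indicator (fun _ => (1 : ℝ)) (z.1, z.2 a) ≤ c}
  have hB : MeasurableSet B :=
    measurableSet_le (Finset.measurable_sum _ fun a _ => (measurable_const.indicator hE).comp
      (measurable_fst.prodMk ((measurable_pi_apply a).comp measurable_snd))) measurable_const
  have hset : {ω | ∑ a ∈ s, E.indicator (fun _ => (1 : ℝ)) (X u ω, X a ω) ≤ c}
      = {ω | (X u ω, Y ω) ∈ B} := by
    ext ω
    simp only [Set.mem_ofPred_eq, B, Y,
      sum_coe_sort s fun a => E.indicator (fun _ => (1 : ℝ)) (X u ω, X a ω)]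
  have hsection : ∀ y, p ≤ ν.real (Prod.mk y ⁻¹' E) →
      μ {ω | (y, Y ω) ∈ B} ≤ ENNReal.ofReal (exp (-(δ ^ 2 * #s * p / 2))) := by
    intro y hy
    let A : ι → Set Ω := fun a => X a ⁻¹' (Prod.mk y ⁻¹' E)
    have hA : ∀ a, MeasurableSet (A a) := fun a => hX a (measurable_prodMk_left hE)
    have hAind : iIndepSet A μ :=
      (iIndepSet_iff_meas_biInter hA).2 fun t => hind.meas_biInter fun a _ =>
        ⟨_, measurable_prodMk_left hE, rfl⟩
    have hpA : ∀ a ∈ s, p ≤ μ.real (A a) := fun a _ => by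
      rwa [← map_measureReal_apply (hX a) (measurable_prodMk_left hE), hlaw a]
    convert measure_sum_indicator_le_le_exp hA hAind s hp0 hpA hδ0 hδ1 using 2
    ext ω
    simp only [Set.mem_ofPred_eq, B, Y, A, Set.indicator_apply, Set.mem_preimage]
    rw [sum_coe_sort s fun a => if (y, X a ω) ∈ E then (1 : ℝ) else 0]
  have : IsProbabilityMeasure ν := hlaw u ▸ Measure.isProbabilityMeasure_map (hX u).aemeasurable
  rw [hset, hXY.measure_mem_eq_lintegral (hX u) hY hB, hlaw u]
  calc ∫⁻ y, μ {ω | (y, Y ω) ∈ B} ∂ν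
      ≤ ∫⁻ _, ENNReal.ofReal (exp (-(δ ^ 2 * #s * p / 2))) ∂ν :=
        lintegral_mono_ae (hp.mono hsection)
    _ = ENNReal.ofReal (exp (-(δ ^ 2 * #s * p / 2))) := by simp

lemma ofReal_one_sub_card_mul_le_measure {ι : Type*} [Fintype ι] {bad : ι → Set Ω} {G : Set Ω}
    {b : ℝ} (hb : 0 ≤ b) (hbad : ∀ i, μ (bad i) ≤ ENNReal.ofReal b)
    (hG : ∀ᵐ ω ∂μ, (∀ i, ω ∉ bad i) → ω ∈ G) :
    ENNReal.ofReal (1 - Fintype.card ι * b) ≤ μ G := by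
  calc ENNReal.ofReal (1 - Fintype.card ι * b) = 1 - Fintype.card ι * ENNReal.ofReal b := by
        rw [ENNReal.ofReal_sub _ (by positivity), ENNReal.ofReal_one,
          ENNReal.ofReal_mul (Nat.cast_nonneg _), ENNReal.ofReal_natCast]
    _ ≤ 1 - μ (⋃ i, bad i) := by
        refine tsub_le_tsub_left ((measure_iUnion_fintype_le μ bad).trans ?_) 1
        simpa using sum_le_sum fun i (_ : i ∈ univ) => hbad i
    _ ≤ μ (⋃ i, bad i)ᶜ :=
        tsub_le_iff_left.2 (measure_univ (μ := μ) ▸ measure_univ_le_add_compl _)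
    _ ≤ μ G :=
        measure_mono_ae (hG.mono fun ω h hω => h fun i hi => hω (Set.mem_iUnion.2 ⟨i, hi⟩))

end Probability

lemma le_measureReal_abs_sub_le {y ε : ℝ} (hy : y ∈ Set.Icc (0:ℝ) 1) (hε0 : 0 ≤ ε)
    (hε1 : ε ≤ 1) :
    ε ≤ (volume.restrict (Set.Icc (0:ℝ) 1)).real {z | |y - z| ≤ ε} := by
  have hset : {z | |y - z| ≤ ε} = Set.Icc (y - ε) (y + ε) := by
    ext z
    simp only [Set.mem_ofPred_eq, Set.mem_Icc, abs_sub_le_iff]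
    constructor <;> rintro ⟨h1, h2⟩ <;> constructor <;> linarith
  rw [hset, measureReal_restrict_apply measurableSet_Icc, Set.Icc_inter_Icc,
    Real.volume_real_Icc]
  refine le_max_of_le_left ?_
  obtain ⟨hy0, hy1⟩ := hy
  rcases le_total (y + ε) 1 with h | h
  · rw [min_eq_left h]
    linarith [max_le (by linarith : y - ε ≤ y) hy0]
  · rw [min_eq_right h]
    linarith [max_le (by linarith : y - ε ≤ 1 - ε) (by linarith : (0:ℝ) ≤ 1 - ε)]

lemma le_one_div_card_mul_sum_of_mul_card_lt {ι : Type*} {s : Finset ι} {g h : ι → ℝ} {c : ℝ}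
    (hgh : ∀ i ∈ s, g i ≤ h i) (hlt : c * #s < ∑ i ∈ s, g i) :
    c ≤ 1 / #s * ∑ i ∈ s, h i := by
  have hs : s.Nonempty := nonempty_iff_ne_empty.2 fun h => by simp [h] at hlt
  rw [one_div_mul_eq_div, le_div_iff₀ (by exact_mod_cast hs.card_pos)]
  linarith [sum_le_sum hgh]

theorem ofReal_le_measure_forall_neighbour_frac_ge {Ω : Type*} [MeasurableSpace Ω]
    {μ : Measure Ω} [IsProbabilityMeasure μ] {n : ℕ} {θ : Fin n → Ω → ℝ}
    (hθmeas : ∀ u, Measurable (θ u)) (hθindep : iIndepFun θ μ)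
    (hθlaw : ∀ u, μ.map (θ u) = volume.restrict (Set.Icc (0:ℝ) 1)) {ε δ : ℝ} (hε0 : 0 ≤ ε)
    (hε1 : ε ≤ 1) (hδ0 : 0 ≤ δ) (hδ1 : δ < 1) {R : ℝ → ℝ → Prop} [DecidableRel R]
    (hR : ∀ x ∈ Set.Icc (0:ℝ) 1, ∀ y ∈ Set.Icc (0:ℝ) 1, |x - y| ≤ ε → R x y) :
    ENNReal.ofReal (1 - n * exp (-(δ ^ 2 * ((n : ℝ) - 1) * ε / 2)))
      ≤ μ {ω | ∀ u, (1 - δ) * ε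
          ≤ 1 / ((n : ℝ) - 1) * ∑ a ∈ univ.erase u, if R (θ u ω) (θ a ω) then (1 : ℝ) else 0} := by
  let E : Set (ℝ × ℝ) := {p | |p.1 - p.2| ≤ ε}
  have hE : MeasurableSet E := (isClosed_le (by fun_prop) continuous_const).measurableSet
  have hcard : ∀ u : Fin n, (#(univ.erase u) : ℝ) = n - 1 := fun u => by
    rw [card_erase_of_mem (mem_univ u), card_univ, Fintype.card_fin, Nat.cast_sub u.pos,
      Nat.cast_one]
  have hIcc : ∀ᵐ ω ∂μ, ∀ a, θ a ω ∈ Set.Icc (0:ℝ) 1 := ae_all_iff.2 fun a =>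
    ae_of_ae_map (hθmeas a).aemeasurable
      (by rw [hθlaw a]; exact ae_restrict_mem measurableSet_Icc)
  have hsection : ∀ᵐ y ∂(volume.restrict (Set.Icc (0:ℝ) 1)),
      ε ≤ (volume.restrict (Set.Icc (0:ℝ) 1)).real (Prod.mk y ⁻¹' E) :=
    (ae_restrict_iff' measurableSet_Icc).2
      (Filter.Eventually.of_forall fun y hy => le_measureReal_abs_sub_le hy hε0 hε1)
  refine (le_of_eq (by rw [Fintype.card_fin])).trans <|
    ofReal_one_sub_card_mul_le_measure (exp_nonneg _)
      (bad := fun u => {ω | ∑ a ∈ univ.erase u, E.indicator (fun _ => (1:ℝ)) (θ u ω, θ a ω)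
        ≤ (1 - δ) * #(univ.erase u) * ε})
      (fun u => (measure_sum_indicator_pair_le_le_exp hθmeas hθindep hθlaw hE hε0 hsection
        hδ0 hδ1 (notMem_erase u univ)).trans_eq (by rw [hcard]))
      (hIcc.mono fun ω hω hgood u => ?_)
  have hlt : (1 - δ) * #(univ.erase u) * ε
      < ∑ a ∈ univ.erase u, E.indicator (fun _ => (1:ℝ)) (θ u ω, θ a ω) :=
    not_le.1 (hgood u)
  rw [← hcard u]
  refine le_one_div_card_mul_sum_of_mul_card_lt (fun a _ => ?_) (by linarith)
  by_cases hca : (θ u ω, θ a ω) ∈ E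
  · rw [Set.indicator_of_mem hca, if_pos (hR _ (hω u) _ (hω a) hca)]
  · rw [Set.indicator_of_notMem hca]
    split_ifs <;> norm_num

lemma integral_sq_sum_mul_eq_sum_sq {α ι : Type*} [MeasurableSpace α] [Fintype ι]
    {μ : Measure α} {q : ι → α → ℝ} (hint : ∀ k l, Integrable (fun z => q k z * q l z) μ)
    (hnorm : ∀ k, ∫ z, q k z ^ 2 ∂μ = 1) (horth : ∀ k l, k ≠ l → ∫ z, q k z * q l z ∂μ = 0)
    (c : ι → ℝ) :
    ∫ z, (∑ k, c k * q k z) ^ 2 ∂μ = ∑ k, c k ^ 2 := by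
  have hexp : ∀ z, (∑ k, c k * q k z) ^ 2 = ∑ k, ∑ l, c k * c l * (q k z * q l z) := by
    intro z
    rw [sq, sum_mul_sum]
    exact sum_congr rfl fun k _ => sum_congr rfl fun l _ => by ring
  simp_rw [hexp]
  rw [integral_finsetSum _ fun k _ => integrable_finsetSum _ fun l _ => (hint k l).const_mul _]
  refine sum_congr rfl fun k _ => ?_
  rw [integral_finsetSum _ fun l _ => (hint k l).const_mul _, sum_eq_single k]
  · simp_rw [integral_const_mul, ← sq, hnorm k]
    ring
  · intro l _ hlk
    rw [integral_const_mul, horth k l (Ne.symm hlk), mul_zero]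
  · simp

lemma sum_sq_mul_sub_sq_le_of_lipschitz {ι : Type*} [Fintype ι] {f : ℝ → ℝ → ℝ} {lam : ι → ℝ}
    {q : ι → ℝ → ℝ} (hf : ∀ x y, f x y = ∑ k, lam k * q k x * q k y)
    (hmeas : ∀ k, Measurable (q k)) (hbdd : ∀ k, ∃ C : ℝ, ∀ y ∈ Set.Icc (0:ℝ) 1, |q k y| ≤ C)
    (hnorm : ∀ k, ∫ y in Set.Icc (0:ℝ) 1, (q k y) ^ 2 = 1)
    (horth : ∀ k l, k ≠ l → ∫ y in Set.Icc (0:ℝ) 1, q k y * q l y = 0) {L : ℝ}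
    (hLip : ∀ x ∈ Set.Icc (0:ℝ) 1, ∀ y ∈ Set.Icc (0:ℝ) 1, ∀ z ∈ Set.Icc (0:ℝ) 1,
        |f x z - f y z| ≤ L * |x - y|)
    {x y : ℝ} (hx : x ∈ Set.Icc (0:ℝ) 1) (hy : y ∈ Set.Icc (0:ℝ) 1) :
    ∑ k, lam k ^ 2 * (q k x - q k y) ^ 2 ≤ L ^ 2 * (x - y) ^ 2 := by
  choose C hC using hbdd
  have hint : ∀ k l, IntegrableOn (fun z => q k z * q l z) (Set.Icc 0 1) := fun k l =>
    Measure.integrableOn_of_bounded (M := C k * C l) measure_Icc_lt_top.ne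
      ((hmeas k).mul (hmeas l)).aestronglyMeasurable
      ((ae_restrict_iff' measurableSet_Icc).2 (Filter.Eventually.of_forall fun z hz => by
        rw [norm_mul]
        exact mul_le_mul (hC k z hz) (hC l z hz) (norm_nonneg _)
          ((abs_nonneg _).trans (hC k z hz))))
  have hdiff : ∀ z, f x z - f y z = ∑ k, lam k * (q k x - q k y) * q k z := fun z => by
    rw [hf, hf, ← sum_sub_distrib]
    exact sum_congr rfl fun k _ => by ring
  calc ∑ k, lam k ^ 2 * (q k x - q k y) ^ 2 = ∑ k, (lam k * (q k x - q k y)) ^ 2 := by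
        simp_rw [mul_pow]
    _ = ∫ z in Set.Icc 0 1, (f x z - f y z) ^ 2 := by
        simp_rw [hdiff]
        exact (integral_sq_sum_mul_eq_sum_sq hint hnorm horth _).symm
    _ ≤ ∫ _ in Set.Icc (0:ℝ) 1, L ^ 2 * (x - y) ^ 2 := by
        refine integral_mono_of_nonneg (Filter.Eventually.of_forall fun z => sq_nonneg _)
          (integrable_const _) ((ae_restrict_iff' measurableSet_Icc).2
            (Filter.Eventually.of_forall fun z hz => ?_))
        calc (f x z - f y z) ^ 2 = |f x z - f y z| ^ 2 := (sq_abs _).symm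
          _ ≤ (L * |x - y|) ^ 2 := pow_le_pow_left₀ (abs_nonneg _) (hLip x hx y hy z hz) 2
          _ = L ^ 2 * (x - y) ^ 2 := by rw [mul_pow, sq_abs]
    _ = L ^ 2 * (x - y) ^ 2 := by simp

lemma sum_pow_mul_le_pow_mul_sum {ι : Type*} [Fintype ι] {lam w : ι → ℝ} {k1 : ι}
    (hmax : ∀ k, |lam k| ≤ |lam k1|) (hw : ∀ k, 0 ≤ w k) (t : ℕ) :
    ∑ k, lam k ^ (2 * (t + 1)) * w k ≤ |lam k1| ^ (2 * t) * ∑ k, lam k ^ 2 * w k := by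
  rw [mul_sum]
  refine sum_le_sum fun k _ => ?_
  have hsq : lam k ^ 2 ≤ |lam k1| ^ 2 := by
    rw [← sq_abs]
    exact pow_le_pow_left₀ (abs_nonneg _) (hmax k) 2
  calc lam k ^ (2 * (t + 1)) * w k = (lam k ^ 2) ^ t * (lam k ^ 2 * w k) := by ring
    _ ≤ (|lam k1| ^ 2) ^ t * (lam k ^ 2 * w k) := by
        have := hw k
        gcongr
    _ = |lam k1| ^ (2 * t) * (lam k ^ 2 * w k) := by ring

theorem statement17_general {r n : ℕ} (f : ℝ → ℝ → ℝ) (lam : Fin r → ℝ) (q : Fin r → ℝ → ℝ)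
    (hf : ∀ x y, f x y = ∑ k, lam k * q k x * q k y)
    (hmeas : ∀ k, Measurable (q k))
    (hbdd : ∀ k, ∃ C : ℝ, ∀ y ∈ Set.Icc (0:ℝ) 1, |q k y| ≤ C)
    (hnorm : ∀ k, ∫ y in Set.Icc (0:ℝ) 1, (q k y) ^ 2 = 1)
    (horth : ∀ k l, k ≠ l → ∫ y in Set.Icc (0:ℝ) 1, q k y * q l y = 0)
    (k1 : Fin r) (hmax : ∀ k, |lam k| ≤ |lam k1|)
    (L : ℝ) (hL : 0 < L)
    (hLip : ∀ x ∈ Set.Icc (0:ℝ) 1, ∀ y ∈ Set.Icc (0:ℝ) 1, ∀ z ∈ Set.Icc (0:ℝ) 1,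
        |f x z - f y z| ≤ L * |x - y|)
    (t : ℕ) (d : ℝ → ℝ → ℝ)
    (hd : ∀ x y, d x y = ∑ k, (lam k) ^ (2 * (t + 1)) * (q k x - q k y) ^ 2)
    (Ω : Type) [MeasurableSpace Ω] (μ : Measure Ω) [IsProbabilityMeasure μ]
    (θ : Fin n → Ω → ℝ) (hθmeas : ∀ u, Measurable (θ u))
    (hθindep : iIndepFun (fun u => θ u) μ)
    (hθlaw : ∀ u, Measure.map (θ u) μ = volume.restrict (Set.Icc (0:ℝ) 1))
    (δ η' : ℝ) (hδ : δ ∈ Set.Ioo (0:ℝ) 1)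
    (hη' : η' ∈ Set.Ioo (0:ℝ) (|lam k1| ^ (2 * t) * L ^ 2)) :
    ENNReal.ofReal
        (1 - n * Real.exp (-(δ ^ 2 * ((n : ℝ) - 1) * Real.sqrt η') / (2 * |lam k1| ^ t * L)))
      ≤ μ {ω | ∀ u : Fin n,
          (1 - δ) * Real.sqrt η' / (|lam k1| ^ t * L)
            ≤ (1 / ((n : ℝ) - 1)) * ∑ a ∈ Finset.univ.erase u,
                (if d (θ u ω) (θ a ω) ≤ η' then (1 : ℝ) else 0)} := by
  obtain ⟨hδ0, hδ1⟩ := hδ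
  obtain ⟨hη0, hη1⟩ := hη'
  set X := |lam k1| ^ t * L
  have hX2 : X ^ 2 = |lam k1| ^ (2 * t) * L ^ 2 := by ring
  have hX : 0 < X := lt_of_pow_lt_pow_left₀ 2 (by positivity)
    (by rw [hX2, zero_pow two_ne_zero]; exact hη0.trans hη1)
  have hε1 : √η' / X ≤ 1 := (div_le_one hX).2 ((sqrt_lt' hX).2 (hX2 ▸ hη1)).le
  have hclose : ∀ x ∈ Set.Icc (0:ℝ) 1, ∀ y ∈ Set.Icc (0:ℝ) 1,
      |x - y| ≤ √η' / X → d x y ≤ η' := by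
    intro x hx y hy hxy
    calc d x y ≤ |lam k1| ^ (2 * t) * ∑ k, lam k ^ 2 * (q k x - q k y) ^ 2 := by
          rw [hd]
          exact sum_pow_mul_le_pow_mul_sum hmax (fun k => sq_nonneg _) t
      _ ≤ |lam k1| ^ (2 * t) * (L ^ 2 * |x - y| ^ 2) := by
          rw [sq_abs]
          gcongr
          exact sum_sq_mul_sub_sq_le_of_lipschitz hf hmeas hbdd hnorm horth hLip hx hy
      _ ≤ X ^ 2 * (√η' / X) ^ 2 := by rw [hX2, mul_assoc]; gcongr
      _ = η' := by rw [div_pow, sq_sqrt hη0.le]; field_simp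
  convert ofReal_le_measure_forall_neighbour_frac_ge hθmeas hθindep hθlaw (by positivity) hε1
    hδ0.le hδ1 hclose using 5
  · ring
  · rw [mul_div_assoc]

/-- Let f have finite spectrum of rank r and be L-Lipschitz in its first argument,
with d(x,y) = Σ_k λ_k^{2(t+1)}(q_k(x)−q_k(y))² and |λ_1| (index `k1`) the largest eigenvalue
modulus.  Let θ_1,…,θ_n be i.i.d. uniform on [0,1], δ ∈ (0,1), η' ∈ (0,|λ_1|^{2t}L²).  Then with
probability at least 1 − n·exp(−δ²(n−1)√η'/(2|λ_1|^t L)), for every u,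
(1/(n−1)) Σ_{a≠u} 1{d(θ_u,θ_a) ≤ η'} ≥ (1−δ)√η'/(|λ_1|^t L). -/
theorem statement17 {r n : ℕ} (f : ℝ → ℝ → ℝ) (lam : Fin r → ℝ) (q : Fin r → ℝ → ℝ)
    (hrange : ∀ x ∈ Set.Icc (0:ℝ) 1, ∀ y ∈ Set.Icc (0:ℝ) 1, f x y ∈ Set.Icc (0:ℝ) 1)
    (hsymm : ∀ x y, f x y = f y x)
    (hf : ∀ x y, f x y = ∑ k, lam k * q k x * q k y)
    (hne : ∀ k, lam k ≠ 0)
    (hmeas : ∀ k, Measurable (q k))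
    (hbdd : ∀ k, ∃ C : ℝ, ∀ y ∈ Set.Icc (0:ℝ) 1, |q k y| ≤ C)
    (hnorm : ∀ k, ∫ y in Set.Icc (0:ℝ) 1, (q k y) ^ 2 = 1)
    (horth : ∀ k l, k ≠ l → ∫ y in Set.Icc (0:ℝ) 1, q k y * q l y = 0)
    (k1 : Fin r) (hmax : ∀ k, |lam k| ≤ |lam k1|)
    (L : ℝ) (hL : 0 < L)
    (hLip : ∀ x ∈ Set.Icc (0:ℝ) 1, ∀ y ∈ Set.Icc (0:ℝ) 1, ∀ z ∈ Set.Icc (0:ℝ) 1,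
        |f x z - f y z| ≤ L * |x - y|)
    (t : ℕ) (d : ℝ → ℝ → ℝ)
    (hd : ∀ x y, d x y = ∑ k, (lam k) ^ (2 * (t + 1)) * (q k x - q k y) ^ 2)
    (Ω : Type) [MeasurableSpace Ω] (μ : Measure Ω) [IsProbabilityMeasure μ]
    (θ : Fin n → Ω → ℝ) (hθmeas : ∀ u, Measurable (θ u))
    (hθindep : iIndepFun (fun u => θ u) μ)
    (hθlaw : ∀ u, Measure.map (θ u) μ = volume.restrict (Set.Icc (0:ℝ) 1))
    (δ η' : ℝ) (hδ : δ ∈ Set.Ioo (0:ℝ) 1)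
    (hη' : η' ∈ Set.Ioo (0:ℝ) (|lam k1| ^ (2 * t) * L ^ 2)) :
    ENNReal.ofReal
        (1 - n * Real.exp (-(δ ^ 2 * ((n : ℝ) - 1) * Real.sqrt η') / (2 * |lam k1| ^ t * L)))
      ≤ μ {ω | ∀ u : Fin n,
          (1 - δ) * Real.sqrt η' / (|lam k1| ^ t * L)
            ≤ (1 / ((n : ℝ) - 1)) * ∑ a ∈ Finset.univ.erase u,
                (if d (θ u ω) (θ a ω) ≤ η' then (1 : ℝ) else 0)} :=
  statement17_general f lam q hf hmeas hbdd hnorm horth k1 hmax L hL hLip t d hd Ω μ θ hθmeas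
    hθindep hθlaw δ η' hδ hη'
end
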